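/- arXiv:1801.05325 — 2 statements merged into one kernel-verified Lean document; each statement's English description precedes it below -/
import Mathlib

section
/- Let X = (-10, 10) with the usual metric, and define T : X → CB(X) by T x = {-2} for x ∈ (-10,0), T x = [0, 5x/6] for x ∈ [0,2], T x = [0, 2x - 5/3] for x ∈ (2,5], and T x = {9} for x ∈ (5,10). Define α(x,y) = 1 if x, y ∈ [0,2] and 0 otherwise. Then: (a) (X,d) is α-complete, (b) T is α-continuous but not continuous, (c) T is triangular α-admissible, and (d) with ζ(t,s) = (5/6)s − t and G(s,t) = s − t, T is an α-admissible generalized Z_G-contractive multivalued mapping with C_G = 0; consequently T has a fixed point. -/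
open Metric Filter

noncomputable def MM {X : Type*} [MetricSpace X] (T : X → Set X) (x y : X) : ℝ :=
  max (max (dist x y) (infDist x (T x)))
    (max (infDist y (T y)) ((infDist x (T y) + infDist y (T x)) / 2))

def CClass (G : ℝ → ℝ → ℝ) : Prop :=
  Continuous (fun p : ℝ × ℝ => G p.1 p.2) ∧
  (∀ s t, 0 ≤ s → 0 ≤ t → G s t ≤ s) ∧
  (∀ s t, 0 ≤ s → 0 ≤ t → G s t = s → s = 0 ∨ t = 0)

def PropCG (G : ℝ → ℝ → ℝ) (c : ℝ) : Prop :=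
  0 ≤ c ∧ (∀ s t, 0 ≤ s → 0 ≤ t → c < G s t → t < s) ∧ (∀ t, 0 ≤ t → G t t ≤ c)

def CGSim (ζ G : ℝ → ℝ → ℝ) (c : ℝ) : Prop :=
  (∀ t s, 0 < t → 0 < s → ζ t s < G s t) ∧
  ∀ (tn sn : ℕ → ℝ) (l : ℝ), (∀ n, 0 < tn n) → (∀ n, tn n < sn n) → 0 < l →
    Tendsto tn atTop (nhds l) → Tendsto sn atTop (nhds l) →
    limsup (fun n => ζ (tn n) (sn n)) atTop < c

def TriAdm {X : Type*} (T : X → Set X) (α : X → X → ℝ) : Prop :=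
  (∀ x, ∀ y ∈ T x, 1 ≤ α x y → ∀ z ∈ T y, 1 ≤ α y z) ∧
  (∀ x y, 1 ≤ α x y → ∀ z ∈ T y, 1 ≤ α y z → 1 ≤ α x z)

def CBmap {X : Type*} [MetricSpace X] (T : X → Set X) : Prop :=
  ∀ x, (T x).Nonempty ∧ IsClosed (T x) ∧ Bornology.IsBounded (T x)

def AlphaComplete (X : Type*) [MetricSpace X] (α : X → X → ℝ) : Prop :=
  ∀ x : ℕ → X, CauchySeq x → (∀ n, 1 ≤ α (x n) (x (n+1))) → ∃ u, Tendsto x atTop (nhds u)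

def AlphaCont {X : Type*} [MetricSpace X] (T : X → Set X) (α : X → X → ℝ) : Prop :=
  ∀ (x : ℕ → X) (u : X), Tendsto x atTop (nhds u) → (∀ n, 1 ≤ α (x n) (x (n+1))) →
    Tendsto (fun n => hausdorffDist (T (x n)) (T u)) atTop (nhds 0)

abbrev X9 : Type := {x : ℝ // -10 < x ∧ x < 10}

open Classical in
noncomputable def T9 : X9 → Set X9 := fun x =>
  if x.1 < 0 then {y | y.1 = -2}
  else if x.1 ≤ 2 then {y | 0 ≤ y.1 ∧ y.1 ≤ 5 * x.1 / 6}
  else if x.1 ≤ 5 then {y | 0 ≤ y.1 ∧ y.1 ≤ 2 * x.1 - 5 / 3}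
  else {y | y.1 = 9}

open Classical in
noncomputable def α9 : X9 → X9 → ℝ := fun x y =>
  if 0 ≤ x.1 ∧ x.1 ≤ 2 ∧ 0 ≤ y.1 ∧ y.1 ≤ 2 then 1 else 0

/-!
On `I9 = [0, 2]`, the only region where `α9` is nonzero, `T9 x = [0, 5x/6]`, and truncating at the
right end gives `H(T9 x, T9 y) ≤ 5/6 |x - y|`. This single estimate yields α-continuity and the
contraction inequality; compactness of `I9` gives α-completeness and `T9 (I9) ⊆ I9` gives triangular
α-admissibility. Continuity fails at `2`, where `T9` jumps from `[0, 5/3]` to `[0, 7/3]`,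
and `0 ∈ T9 0`.
-/

open Set

section General

variable {X : Type*} {T : X → Set X} {α : X → X → ℝ}

theorem triAdm_of_mapsTo {K : Set X} (hα : ∀ x y, 1 ≤ α x y ↔ x ∈ K ∧ y ∈ K)
    (hT : ∀ x ∈ K, T x ⊆ K) : TriAdm T α :=
  ⟨fun x y _ hxy z hz =>
      have hy := ((hα x y).1 hxy).2
      (hα y z).2 ⟨hy, hT y hy hz⟩,
    fun x y hxy z _ hyz => (hα x z).2 ⟨((hα x y).1 hxy).1, ((hα y z).1 hyz).2⟩⟩

variable [MetricSpace X]

theorem alphaComplete_of_isComplete {K : Set X} (hK : IsComplete K)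
    (hα : ∀ x y, 1 ≤ α x y → x ∈ K) : AlphaComplete X α := fun _ hx hxα =>
  let ⟨u, _, hu⟩ := cauchySeq_tendsto_of_isComplete hK (fun n => hα _ _ (hxα n)) hx
  ⟨u, hu⟩

theorem alphaCont_of_hausdorffDist_le {K : Set X} (hK : IsClosed K) {k : ℝ}
    (hT : ∀ x ∈ K, ∀ y ∈ K, hausdorffDist (T x) (T y) ≤ k * dist x y)
    (hα : ∀ x y, 1 ≤ α x y → x ∈ K) : AlphaCont T α := by
  intro x u hxu hxα
  have hxK n : x n ∈ K := hα _ _ (hxα n)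
  have huK : u ∈ K := hK.mem_of_tendsto hxu (Eventually.of_forall hxK)
  refine squeeze_zero (fun _ => hausdorffDist_nonneg) (fun n => hT _ (hxK n) _ huK) ?_
  simpa using (tendsto_iff_dist_tendsto_zero.mp hxu).const_mul k

theorem dist_le_MM (x y : X) : dist x y ≤ MM T x y :=
  le_max_of_le_left (le_max_left _ _)

end General

def I9 : Set X9 := Subtype.val ⁻¹' Icc 0 2

theorem isCompact_I9 : IsCompact I9 :=
  Topology.IsInducing.subtypeVal.isCompact_preimage' isCompact_Icc fun x hx =>
    ⟨⟨x, by linarith [hx.1], by linarith [hx.2]⟩, rfl⟩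

open Classical in
theorem α9_eq (x y : X9) : α9 x y = if x ∈ I9 ∧ y ∈ I9 then 1 else 0 := by
  simp only [α9, I9, mem_preimage, mem_Icc, and_assoc]

theorem one_le_α9_iff {x y : X9} : 1 ≤ α9 x y ↔ x ∈ I9 ∧ y ∈ I9 := by
  rw [α9_eq]
  split_ifs with h <;> simp [h]

theorem T9_of_mem_I9 {x : X9} (hx : x ∈ I9) : T9 x = {y | 0 ≤ y.1 ∧ y.1 ≤ 5 * x.1 / 6} := by
  simp only [T9, if_neg (not_lt.2 hx.1), if_pos hx.2]

theorem T9_of_two_lt {x : X9} (h2 : 2 < x.1) (h5 : x.1 ≤ 5) :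
    T9 x = {y | 0 ≤ y.1 ∧ y.1 ≤ 2 * x.1 - 5 / 3} := by
  simp only [T9, if_neg (not_lt.2 (by linarith : (0 : ℝ) ≤ x.1)), if_neg (not_le.2 h2), if_pos h5]

theorem zero_mem_T9 {x : X9} (hx : x ∈ I9) : ⟨0, by norm_num⟩ ∈ T9 x := by
  rw [T9_of_mem_I9 hx]
  exact ⟨le_rfl, by linarith [hx.1]⟩

theorem T9_subset_I9 {x : X9} (hx : x ∈ I9) : T9 x ⊆ I9 := by
  rw [T9_of_mem_I9 hx]
  exact fun y hy => ⟨hy.1, by linarith [hx.2, hy.2]⟩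

theorem exists_mem_T9_dist_le {x y : X9} (hx : x ∈ I9) (hy : y ∈ I9) :
    ∀ p ∈ T9 x, ∃ q ∈ T9 y, dist p q ≤ 5 / 6 * dist x y := by
  rw [T9_of_mem_I9 hx, T9_of_mem_I9 hy]
  rintro p ⟨hp0, hpx⟩
  have hq0 : 0 ≤ min p.1 (5 * y.1 / 6) := le_min hp0 (by linarith [hy.1])
  refine ⟨⟨min p.1 (5 * y.1 / 6), by linarith, (min_le_left _ _).trans_lt p.2.2⟩,
    ⟨hq0, min_le_right _ _⟩, ?_⟩
  rw [Subtype.dist_eq, Subtype.dist_eq, Real.dist_eq, Real.dist_eq]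
  change |p.1 - min p.1 (5 * y.1 / 6)| ≤ 5 / 6 * |x.1 - y.1|
  rcases le_total p.1 (5 * y.1 / 6) with h | h
  · simp only [min_eq_left h, sub_self, abs_zero]
    positivity
  · rw [min_eq_right h, abs_of_nonneg (by linarith)]
    linarith [le_abs_self (x.1 - y.1)]

theorem hausdorffDist_T9_le {x y : X9} (hx : x ∈ I9) (hy : y ∈ I9) :
    hausdorffDist (T9 x) (T9 y) ≤ 5 / 6 * dist x y :=
  hausdorffDist_le_of_mem_dist (by positivity) (exists_mem_T9_dist_le hx hy) fun p hp => by
    simpa only [dist_comm y x] using exists_mem_T9_dist_le hy hx p hp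

theorem isBounded_X9 (s : Set X9) : Bornology.IsBounded s :=
  (isBounded_iff_subset_closedBall (⟨0, by norm_num⟩ : X9)).2 ⟨10, fun y _ => by
    rw [mem_closedBall, Subtype.dist_eq, Real.dist_eq, sub_zero, abs_le]
    exact ⟨y.2.1.le, y.2.2.le⟩⟩

-- The right end `2 x - 5 / 3` of `T9 x` is at distance at least `2 / 3` from `T9 u = [0, 5 / 3]`.
theorem two_thirds_le_hausdorffDist_T9 {x u : X9} (h2 : 2 < x.1) (h5 : x.1 ≤ 5) (hu : u.1 = 2) :
    2 / 3 ≤ hausdorffDist (T9 x) (T9 u) := by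
  have huI : u ∈ I9 := by simp only [I9, mem_preimage, hu, mem_Icc]; norm_num
  let p : X9 := ⟨2 * x.1 - 5 / 3, by linarith, by linarith⟩
  have hp : p ∈ T9 x := by
    rw [T9_of_two_lt h2 h5]
    exact ⟨by dsimp only [p]; linarith, le_rfl⟩
  have hne : (T9 u).Nonempty := ⟨_, zero_mem_T9 huI⟩
  have hfin := hausdorffEDist_ne_top_of_nonempty_of_bounded ⟨p, hp⟩ hne
    (isBounded_X9 _) (isBounded_X9 _)
  refine le_trans ?_ (infDist_le_hausdorffDist_of_mem hp hfin)
  refine (le_infDist hne).2 fun q hq => ?_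
  rw [T9_of_mem_I9 huI, hu] at hq
  rw [Subtype.dist_eq, Real.dist_eq]
  exact le_abs.2 (Or.inl (by dsimp only [p]; linarith [hq.2]))

theorem not_forall_tendsto_hausdorffDist_T9 :
    ¬ ∀ (x : ℕ → X9) (u : X9), Tendsto x atTop (nhds u) →
      Tendsto (fun n => hausdorffDist (T9 (x n)) (T9 u)) atTop (nhds 0) := by
  intro hcont
  have hε (n : ℕ) : (0 : ℝ) < 1 / (n + 1) ∧ (1 : ℝ) / (n + 1) ≤ 1 := by
    refine ⟨by positivity, (div_le_one (by positivity)).2 ?_⟩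
    linarith [n.cast_nonneg (α := ℝ)]
  let x : ℕ → X9 := fun n => ⟨2 + 1 / (n + 1), by linarith [hε n], by linarith [hε n]⟩
  let u : X9 := ⟨2, by norm_num⟩
  have hxu : Tendsto x atTop (nhds u) := by
    rw [tendsto_subtype_rng]
    change Tendsto (fun n : ℕ => 2 + 1 / ((n : ℝ) + 1)) atTop (nhds 2)
    simpa using tendsto_one_div_add_atTop_nhds_zero_nat.const_add (2 : ℝ)
  obtain ⟨n, hn⟩ := ((hcont x u hxu).eventually_lt_const (by norm_num : (0 : ℝ) < 2 / 3)).exists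
  have := two_thirds_le_hausdorffDist_T9 (x := x n) (u := u) (by dsimp only [x]; linarith [hε n])
    (by dsimp only [x]; linarith [hε n]) rfl
  linarith

theorem T9_contraction (x y : X9) :
    0 ≤ 5 / 6 * MM T9 x y - α9 x y * hausdorffDist (T9 x) (T9 y) := by
  have hdM : dist x y ≤ MM T9 x y := dist_le_MM x y
  rw [α9_eq]
  split_ifs with hxy
  · linarith [hausdorffDist_T9_le hxy.1 hxy.2]
  · linarith [dist_nonneg (x := x) (y := y)]

theorem stmt9 :
    AlphaComplete X9 α9 ∧
    (AlphaCont T9 α9 ∧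
      ¬ (∀ (x : ℕ → X9) (u : X9), Tendsto x atTop (nhds u) →
        Tendsto (fun n => hausdorffDist (T9 (x n)) (T9 u)) atTop (nhds 0))) ∧
    TriAdm T9 α9 ∧
    (∀ x y : X9, x ≠ y →
      (0 : ℝ) ≤ 5 / 6 * MM T9 x y - α9 x y * hausdorffDist (T9 x) (T9 y)) ∧
    ∃ u : X9, u ∈ T9 u := by
  have hαI : ∀ x y, 1 ≤ α9 x y → x ∈ I9 := fun _ _ h => (one_le_α9_iff.1 h).1
  have h0 : (⟨0, by norm_num⟩ : X9) ∈ I9 := by simp [I9]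
  exact ⟨alphaComplete_of_isComplete isCompact_I9.isComplete hαI,
    ⟨alphaCont_of_hausdorffDist_le isCompact_I9.isClosed
      (fun _ hx _ hy => hausdorffDist_T9_le hx hy) hαI, not_forall_tendsto_hausdorffDist_T9⟩,
    triAdm_of_mapsTo (fun _ _ => one_le_α9_iff) (fun _ => T9_subset_I9),
    fun x y _ => T9_contraction x y, ⟨_, zero_mem_T9 h0⟩⟩
end

section
/- Let (X,d) be a metric space, T : X → CB(X) an α-admissible generalized Z_G-contractive multivalued mapping, and {xₙ} a sequence with x_{n+1} ∈ T xₙ, xₙ ∉ T xₙ, d(x_{n+1}, x_{n+2}) ≤ H(T xₙ, T x_{n+1}), and α(xₙ, x_{n+1}) ≥ 1 for all n. Then the sequence {d(xₙ, x_{n+1})} is strictly decreasing and converges to 0. -/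
open Metric Filter

theorem stmt14 {X : Type*} [MetricSpace X] (T : X → Set X) (hT : CBmap T)
    (α : X → X → ℝ) (hα : ∀ x y, 0 ≤ α x y)
    (ζ G : ℝ → ℝ → ℝ) (c : ℝ)
    (hG : CClass G) (hc : PropCG G c) (hζ : CGSim ζ G c)
    (hcontr : ∀ x y, x ≠ y → c ≤ ζ (α x y * hausdorffDist (T x) (T y)) (MM T x y))
    (x : ℕ → X) (h1 : ∀ n, x (n + 1) ∈ T (x n)) (h2 : ∀ n, x n ∉ T (x n))
    (h3 : ∀ n, dist (x (n + 1)) (x (n + 2)) ≤ hausdorffDist (T (x n)) (T (x (n + 1))))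
    (h4 : ∀ n, 1 ≤ α (x n) (x (n + 1))) :
    StrictAnti (fun n => dist (x n) (x (n + 1))) ∧
    Tendsto (fun n => dist (x n) (x (n + 1))) atTop (nhds 0) := by
  classical
  set d : ℕ → ℝ := fun n => dist (x n) (x (n + 1)) with hd
  have hdpos : ∀ n, 0 < d n := by
    intro n
    have : x n ≠ x (n + 1) := fun h => h2 n (h ▸ h1 n)
    exact dist_pos.mpr this
  set t : ℕ → ℝ := fun n => α (x n) (x (n+1)) * hausdorffDist (T (x n)) (T (x (n+1))) with ht
  set s : ℕ → ℝ := fun n => MM T (x n) (x (n+1)) with hs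
  have htged : ∀ n, d (n+1) ≤ t n := by
    intro n
    have h1' : d (n+1) ≤ hausdorffDist (T (x n)) (T (x (n+1))) := h3 n
    have := le_mul_of_one_le_left (hausdorffDist_nonneg (s := T (x n)) (t := T (x (n+1)))) (h4 n)
    exact h1'.trans this
  have htpos : ∀ n, 0 < t n := fun n => lt_of_lt_of_le (hdpos (n+1)) (htged n)
  have hsged : ∀ n, d n ≤ s n := by
    intro n
    exact le_max_of_le_left (le_max_left _ _)
  have hsle : ∀ n, s n ≤ max (d n) (d (n+1)) := by
    intro n
    have hb1 : dist (x n) (x (n+1)) ≤ max (d n) (d (n+1)) := le_max_left _ _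
    have hb2 : infDist (x n) (T (x n)) ≤ max (d n) (d (n+1)) :=
      le_trans (infDist_le_dist_of_mem (h1 n)) (le_max_left _ _)
    have hb3 : infDist (x (n+1)) (T (x (n+1))) ≤ max (d n) (d (n+1)) :=
      le_trans (infDist_le_dist_of_mem (h1 (n+1))) (le_max_right _ _)
    have hz : infDist (x (n+1)) (T (x n)) = 0 := by
      have h := infDist_le_dist_of_mem (x := x (n+1)) (h1 n)
      simp at h
      exact le_antisymm h (infDist_nonneg)
    have hb4' : infDist (x n) (T (x (n+1))) ≤ d n + d (n+1) := by
      calc infDist (x n) (T (x (n+1))) ≤ dist (x n) (x (n+2)) := infDist_le_dist_of_mem (h1 (n+1))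
        _ ≤ dist (x n) (x (n+1)) + dist (x (n+1)) (x (n+2)) := dist_triangle _ _ _
    have hb4 : (infDist (x n) (T (x (n+1))) + infDist (x (n+1)) (T (x n))) / 2
        ≤ max (d n) (d (n+1)) := by
      rw [hz, add_zero]
      have : (d n + d (n+1)) / 2 ≤ max (d n) (d (n+1)) := by
        have := max_le_add_of_nonneg (le_of_lt (hdpos n)) (le_of_lt (hdpos (n+1)))
        have h1 : d n ≤ max (d n) (d (n+1)) := le_max_left _ _
        have h2 : d (n+1) ≤ max (d n) (d (n+1)) := le_max_right _ _
        linarith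
      linarith [hb4']
    exact max_le (max_le hb1 hb2) (max_le hb3 hb4)
  have htlts : ∀ n, t n < s n := by
    intro n
    have hne : x n ≠ x (n+1) := fun h => h2 n (h ▸ h1 n)
    have hcl : c ≤ ζ (t n) (s n) := hcontr _ _ hne
    have hspos : 0 < s n := lt_of_lt_of_le (hdpos n) (hsged n)
    have hlt : ζ (t n) (s n) < G (s n) (t n) := hζ.1 _ _ (htpos n) hspos
    exact hc.2.1 (s n) (t n) (le_of_lt hspos) (le_of_lt (htpos n)) (lt_of_le_of_lt hcl hlt)
  have hdec : ∀ n, d (n+1) < d n := by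
    intro n
    have h := lt_of_le_of_lt (htged n) (lt_of_lt_of_le (htlts n) (hsle n))
    rcases max_cases (d n) (d (n+1)) with ⟨he, _⟩ | ⟨he, _⟩
    · rw [he] at h
      exact h
    · rw [he] at h
      exact absurd h (lt_irrefl _)
  have hanti : StrictAnti d := strictAnti_nat_of_succ_lt hdec
  refine ⟨hanti, ?_⟩
  have hbdd : BddBelow (Set.range d) := ⟨0, by rintro _ ⟨n, rfl⟩; exact le_of_lt (hdpos n)⟩
  have hlim : Tendsto d atTop (nhds (⨅ n, d n)) :=
    tendsto_atTop_ciInf hanti.antitone hbdd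
  set l := ⨅ n, d n with hl
  have hlnn : 0 ≤ l := le_ciInf fun n => le_of_lt (hdpos n)
  rcases eq_or_lt_of_le hlnn with hl0 | hlpos
  · rwa [← hl0] at hlim
  · exfalso
    have hd1 : Tendsto (fun n => d (n+1)) atTop (nhds l) :=
      hlim.comp (tendsto_add_atTop_nat 1)
    have hsled : ∀ n, s n ≤ d n := by
      intro n
      have := hsle n
      rw [max_eq_left (le_of_lt (hdec n))] at this
      exact this
    have htend_t : Tendsto t atTop (nhds l) := by
      refine tendsto_of_tendsto_of_tendsto_of_le_of_le hd1 hlim (fun n => htged n) ?_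
      intro n
      exact le_trans (le_of_lt (htlts n)) (hsled n)
    have htend_s : Tendsto s atTop (nhds l) :=
      tendsto_of_tendsto_of_tendsto_of_le_of_le hd1 hlim
        (fun n => le_trans (htged n) (le_of_lt (htlts n))) hsled
    have hlimsup : limsup (fun n => ζ (t n) (s n)) atTop < c :=
      hζ.2 t s l htpos htlts hlpos htend_t htend_s
    have hbound : IsBoundedUnder (· ≤ ·) atTop (fun n => ζ (t n) (s n)) := by
      refine isBoundedUnder_of ⟨d 0, fun n => ?_⟩
      have h1 : ζ (t n) (s n) < G (s n) (t n) :=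
        hζ.1 _ _ (htpos n) (lt_of_lt_of_le (hdpos n) (hsged n))
      have h2 : G (s n) (t n) ≤ s n :=
        hG.2.1 _ _ (le_of_lt (lt_of_lt_of_le (hdpos n) (hsged n))) (le_of_lt (htpos n))
      have h3 : s n ≤ d 0 := le_trans (hsled n) (hanti.antitone (Nat.zero_le n))
      linarith
    have hge : c ≤ limsup (fun n => ζ (t n) (s n)) atTop :=
      le_limsup_of_frequently_le (Frequently.of_forall fun n => hcontr _ _
        (fun h => h2 n (h ▸ h1 n))) hbound
    exact absurd (lt_of_le_of_lt hge hlimsup) (lt_irrefl c)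
end
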